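/- Let n ≥ 3 and let r = ⌊n/2⌋. Then the compound curling number of the r-th power of the path graph P_n equals 2^r. -/

import Mathlib

open Finset

/-- The degree of a vertex `v` in a simple graph `G`: the number of its neighbours. -/
noncomputable def gdeg {V : Type*} (G : SimpleGraph V) (v : V) : ℕ :=
  (G.neighborSet v).ncard

/-- The compound curling number of a finite simple graph: the product, over all
values `d` occurring as a vertex degree of `G`, of the number of vertices of degree `d`. -/
noncomputable def compoundCurlingNumber {V : Type*} [Fintype V] (G : SimpleGraph V) : ℕ :=
  ∏ d ∈ Finset.univ.image (gdeg G), (Finset.univ.filter fun u => gdeg G u = d).card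

/-- The `r`-th power of a simple graph `G`: same vertex set, two distinct vertices
adjacent iff their distance in `G` is (finite and) at most `r`. -/
def SimpleGraph.power {V : Type*} (G : SimpleGraph V) (r : ℕ) : SimpleGraph V where
  Adj u v := u ≠ v ∧ G.Reachable u v ∧ G.dist u v ≤ r
  symm := by
    constructor
    rintro u v ⟨h1, h2, h3⟩
    exact ⟨h1.symm, h2.symm, by rwa [SimpleGraph.dist_comm]⟩
  loopless := by
    constructor
    rintro v ⟨h1, -, -⟩
    exact h1 rfl


/-! In `P_n ^ ⌊n/2⌋` the vertex `i` sees every vertex within distance `⌊n/2⌋`, and only the nearer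
end of the path cuts that window short, so its degree is `⌊n/2⌋ + min(i, n - 1 - i)`. Two vertices
thus have the same degree exactly when they are mirror images `i`, `n - 1 - i`: every degree class
has one or two vertices, and a product of class sizes all equal to `1` or `2` is
`2 ^ (#vertices - #classes) = 2 ^ (n - ⌈n/2⌉) = 2 ^ ⌊n/2⌋`. -/

open SimpleGraph

theorem prod_card_fiber_eq_two_pow {α β : Type*} [Fintype α] [DecidableEq β] (f : α → β)
    (hf : ∀ a, #{a' | f a' = f a} ≤ 2) :
    ∏ b ∈ univ.image f, #{a | f a = b} = 2 ^ (Fintype.card α - #(univ.image f)) := by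
  have hpos : ∀ b ∈ univ.image f, 1 ≤ #{a | f a = b} := by
    simp only [mem_image, mem_univ, true_and, forall_exists_index, forall_apply_eq_imp_iff]
    exact fun a => card_pos.2 ⟨a, by simp⟩
  have hpow : ∀ b ∈ univ.image f, #{a | f a = b} = 2 ^ (#{a | f a = b} - 1) := by
    simp only [mem_image, mem_univ, true_and, forall_exists_index, forall_apply_eq_imp_iff]
    intro a
    have h1 := hpos (f a) (mem_image_of_mem f (mem_univ a))
    have h2 := hf a
    generalize #{a' | f a' = f a} = c at h1 h2 ⊢
    interval_cases c <;> rfl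
  rw [prod_congr rfl hpow, prod_pow_eq_pow_sum, sum_tsub_distrib _ hpos, ← card_univ,
    card_eq_sum_card_image f univ, sum_const, smul_eq_mul, mul_one]

lemma pathGraph_exists_walk_length {n : ℕ} (u v : Fin n) (h : u ≤ v) :
    ∃ p : (pathGraph n).Walk u v, p.length = v - u := by
  obtain ⟨k, hk⟩ : ∃ k, (v : ℕ) = u + k := Nat.exists_eq_add_of_le h
  induction k generalizing u with
  | zero =>
    obtain rfl : u = v := Fin.ext (by omega)
    exact ⟨.nil, by simp⟩
  | succ k ih =>
    have hu : (u : ℕ) + 1 < n := by omega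
    have hadj : (pathGraph n).Adj u ⟨u + 1, hu⟩ := by
      rw [pathGraph_adj]
      exact .inl rfl
    obtain ⟨p, hp⟩ := ih ⟨u + 1, hu⟩ (Fin.le_def.2 (by simp only; omega)) (by simp only; omega)
    exact ⟨.cons hadj p, by simp only [Walk.length_cons, hp]; omega⟩

lemma pathGraph_dist_le_length {n : ℕ} {u v : Fin n} (p : (pathGraph n).Walk u v) :
    Nat.dist u v ≤ p.length := by
  induction p with
  | nil => simp
  | cons h p ih =>
    rw [pathGraph_adj] at h
    simp only [Walk.length_cons, Nat.dist] at *
    omega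

theorem pathGraph_dist {n : ℕ} (u v : Fin n) : (pathGraph n).dist u v = Nat.dist u v := by
  apply le_antisymm
  · rcases le_total u v with h | h
    · obtain ⟨p, hp⟩ := pathGraph_exists_walk_length u v h
      have := dist_le p
      rw [hp] at this
      simp only [Nat.dist]
      omega
    · obtain ⟨p, hp⟩ := pathGraph_exists_walk_length v u h
      have := dist_le p.reverse
      rw [Walk.length_reverse, hp] at this
      simp only [Nat.dist]
      omega
  · obtain ⟨p, hp⟩ := (pathGraph_preconnected n u v).exists_walk_length_eq_dist
    exact hp ▸ pathGraph_dist_le_length p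

theorem pathGraph_power_adj {n r : ℕ} {u v : Fin n} :
    ((pathGraph n).power r).Adj u v ↔ u ≠ v ∧ Nat.dist u v ≤ r := by
  simp only [power, pathGraph_dist, pathGraph_preconnected n u v, true_and]

-- The neighbours fill the window `[i - r, min (n - 1) (i + r)]` minus `i`; truncated subtraction
-- makes `i - r` the clipped left end `max 0 (i - r)`.
theorem gdeg_pathGraph_power (n r : ℕ) (i : Fin n) :
    gdeg ((pathGraph n).power r) i = min (n - 1) (i + r) - (i - r) := by
  classical
  have hnbr : ((pathGraph n).power r).neighborSet i
      = ↑({j | i ≠ j ∧ Nat.dist i j ≤ r} : Finset (Fin n)) := by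
    ext j
    simp [pathGraph_power_adj]
  have hwindow : ({j | i ≠ j ∧ Nat.dist i j ≤ r} : Finset (Fin n)).map Fin.valEmbedding
      = (Icc (i - r) (min (n - 1) (i + r))).erase i := by
    ext m
    simp only [mem_map, mem_filter, mem_univ, true_and, Fin.valEmbedding_apply, Fin.exists_iff,
      mem_erase, mem_Icc, Nat.dist, ne_eq, Fin.ext_iff]
    constructor
    · rintro ⟨m, hm, ⟨h1, h2⟩, rfl⟩
      omega
    · rintro ⟨h1, h2, h3⟩
      exact ⟨m, by omega, ⟨by omega, by omega⟩, rfl⟩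
  have hi := i.isLt
  rw [gdeg, hnbr, Set.ncard_coe_finset, ← card_map Fin.valEmbedding, hwindow,
    card_erase_of_mem (by simp only [mem_Icc]; omega), Nat.card_Icc]
  omega

lemma card_image_min_sub (n : ℕ) :
    #(univ.image fun i : Fin n => min (i : ℕ) (n - 1 - i)) = n - n / 2 := by
  have himage : (univ.image fun i : Fin n => min (i : ℕ) (n - 1 - i)) = range (n - n / 2) := by
    ext j
    simp only [mem_image, mem_univ, true_and, mem_range]
    constructor
    · rintro ⟨i, rfl⟩
      omega
    · intro hj
      exact ⟨⟨j, by omega⟩, by simp only; omega⟩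
  rw [himage, card_range]

lemma card_filter_min_sub_eq_le_two {n : ℕ} (i : Fin n) :
    #{j : Fin n | min (j : ℕ) (n - 1 - j) = min (i : ℕ) (n - 1 - i)} ≤ 2 := by
  refine (card_le_card fun j hj => ?_).trans (card_le_two (a := i) (b := i.rev))
  simp only [mem_filter, mem_univ, true_and] at hj
  simp only [mem_insert, mem_singleton, Fin.ext_iff, Fin.val_rev]
  omega

theorem compoundCurlingNumber_pathGraph_power_half_general (n r : ℕ) (hr : r = n / 2) :
    compoundCurlingNumber ((SimpleGraph.pathGraph n).power r) = 2 ^ r := by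
  have hdeg : gdeg ((pathGraph n).power r) = (r + ·) ∘ fun i : Fin n => min (i : ℕ) (n - 1 - i) :=
    funext fun i => by
      rw [gdeg_pathGraph_power, Function.comp_apply]
      omega
  have hclasses : #(univ.image (gdeg ((pathGraph n).power r))) = n - n / 2 := by
    rw [hdeg, ← image_image, card_image_of_injective _ (add_right_injective r), card_image_min_sub]
  rw [compoundCurlingNumber, prod_card_fiber_eq_two_pow, Fintype.card_fin, hclasses, hr]
  · congr 1
    omega
  · intro i
    simpa only [hdeg, Function.comp_apply, add_right_inj] using card_filter_min_sub_eq_le_two i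

/-- For `n ≥ 3` and `r = ⌊n/2⌋`, the compound curling number of the `r`-th
power of the path graph `P_n` is `2 ^ r`. -/
theorem compoundCurlingNumber_pathGraph_power_half (n r : ℕ) (hn : 3 ≤ n) (hr : r = n / 2) :
    compoundCurlingNumber ((SimpleGraph.pathGraph n).power r) = 2 ^ r :=
  compoundCurlingNumber_pathGraph_power_half_general n r hr
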